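/- arXiv:1812.02223 — 4 statements merged into one kernel-verified Lean document; each statement's English description precedes it below -/
import Mathlib

section
/- Let A and B be matrices over a field K of sizes p × q and r × s respectively. Then the rank of the Kronecker product A ⊗ B equals rank(A) · rank(B). -/
open Kronecker TensorProduct LinearMap Module

/- Over a field every module is flat, so `range f ⊗ range g → W ⊗ W'` is injective; its image is
the image of `f ⊗ g`. -/
theorem TensorProduct.finrank_range_map {K V W V' W' : Type*} [Field K]
    [AddCommGroup V] [Module K V] [AddCommGroup W] [Module K W]
    [AddCommGroup V'] [Module K V'] [AddCommGroup W'] [Module K W']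
    (f : V →ₗ[K] W) (g : V' →ₗ[K] W') :
    finrank K (range (map f g)) = finrank K (range f) * finrank K (range g) := by
  rw [range_map, ← range_mapIncl,
    finrank_range_of_inj (Flat.tensorProduct_mapIncl_injective_of_right _ _),
    finrank_tensorProduct]

theorem Matrix.rank_kronecker {K m n m' n' : Type*} [Field K]
    [Fintype m] [Fintype n] [Fintype m'] [Fintype n'] [DecidableEq n] [DecidableEq n']
    (A : Matrix m n K) (B : Matrix m' n' K) :
    (A ⊗ₖ B).rank = A.rank * B.rank := by
  let bm := Pi.basisFun K m
  let bn := Pi.basisFun K n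
  let bm' := Pi.basisFun K m'
  let bn' := Pi.basisFun K n'
  rw [rank_eq_finrank_range_toLin (A ⊗ₖ B) (bm.tensorProduct bm') (bn.tensorProduct bn'),
    toLin_kronecker, finrank_range_map, ← rank_eq_finrank_range_toLin A bm bn,
    ← rank_eq_finrank_range_toLin B bm' bn']

theorem stmt_3 (K : Type*) [Field K] (p q r s : ℕ)
    (A : Matrix (Fin p) (Fin q) K) (B : Matrix (Fin r) (Fin s) K) :
    (A ⊗ₖ B).rank = A.rank * B.rank :=
  Matrix.rank_kronecker A B
end

section
/- Let K be a field and s ≥ 2. Let L(t_0, t_1) be the s × s linear matrix with t_1 in position (1,1), −t_1 in positions (i,i) for 2 ≤ i ≤ s, t_0 in positions (i, i+1) for 1 ≤ i ≤ s−1, and −t_1 in position (s,1), all other entries zero. Then for every d ≥ 1 and every d × d matrix A over K, the rank of the sd × sd matrix L(I_d, A) equals (s−1)d + rank(A^s − A). -/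
/-!
Write `x ∈ K^{sd}` in blocks `x₀, …, x_{s-1}`. The first `s - 1` block rows of
`L(I_d, A) x = 0` say `x_k = -A^k x₀` for `1 ≤ k < s`, and the last one then says
`(A^s - A) x₀ = 0`. Hence `x ↦ x₀` is an isomorphism from `ker L(I_d, A)` onto `ker (A^s - A)`,
with inverse `v ↦ (v, -A v, …, -A^{s-1} v)`, and rank–nullity on both sides gives the formula.
-/

/-- The `sd × sd` matrix `L(t₀, t₁)` with `t₀ := B₀` and `t₁ := B₁` (`d × d` blocks):
diagonal blocks `B₁, -B₁, …, -B₁`, superdiagonal blocks `B₀`, block `-B₁` in position `(s,1)`. -/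
def Lsub {K : Type*} [Field K] (s d : ℕ) (B₀ B₁ : Matrix (Fin d) (Fin d) K) :
    Matrix (Fin s × Fin d) (Fin s × Fin d) K :=
  Matrix.of fun p q =>
    (if p.1 = q.1 then (if (p.1 : ℕ) = 0 then B₁ p.2 q.2 else -B₁ p.2 q.2) else 0)
    + (if (q.1 : ℕ) = (p.1 : ℕ) + 1 then B₀ p.2 q.2 else 0)
    + (if (p.1 : ℕ) = s - 1 ∧ (q.1 : ℕ) = 0 ∧ p.1 ≠ q.1 then -B₁ p.2 q.2 else 0)

section

open Matrix

variable {K : Type*} [Field K] {s d : ℕ}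

lemma Lsub_one_mulVec_apply (A : Matrix (Fin d) (Fin d) K) (x : Fin s × Fin d → K)
    (i : Fin s) (a : Fin d) :
    (Lsub s d 1 A *ᵥ x) (i, a) =
      (if (i : ℕ) = 0 then (A *ᵥ fun b => x (i, b)) a else -(A *ᵥ fun b => x (i, b)) a)
      + (if h : (i : ℕ) + 1 < s then x (⟨i + 1, h⟩, a) else 0)
      + (if (i : ℕ) = s - 1 ∧ (i : ℕ) ≠ 0 then -(A *ᵥ fun b => x (⟨0, i.pos⟩, b)) a else 0) := by
  simp only [mulVec, dotProduct, Lsub, of_apply, Fintype.sum_prod_type, add_mul,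
    Finset.sum_add_distrib, one_apply, ite_mul, one_mul, zero_mul, neg_mul,
    Finset.sum_neg_distrib, Finset.sum_ite_irrel, Finset.sum_const_zero, Fintype.sum_ite_eq]
  congr 1
  · congr 1
    split_ifs with h
    · simp_rw [← Fin.ext_iff (b := ⟨_, h⟩), Fintype.sum_ite_eq']
    · exact Finset.sum_eq_zero fun j _ => if_neg (by omega)
  · by_cases h : (i : ℕ) = s - 1 ∧ (i : ℕ) ≠ 0
    · have hcond : ∀ j : Fin s, (↑i = s - 1 ∧ (j : ℕ) = 0 ∧ i ≠ j) ↔ j = ⟨0, i.pos⟩ := by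
        intro j; simp only [Fin.ext_iff]; omega
      simp_rw [hcond, Fintype.sum_ite_eq', if_pos h]
    · rw [if_neg h]
      exact Finset.sum_eq_zero fun j _ => if_neg (by simp only [ne_eq, Fin.ext_iff]; omega)

def expandByPowers (s : ℕ) (A : Matrix (Fin d) (Fin d) K) :
    (Fin d → K) →ₗ[K] Fin s × Fin d → K where
  toFun v p := if (p.1 : ℕ) = 0 then v p.2 else -(A ^ (p.1 : ℕ) *ᵥ v) p.2
  map_add' v w := by
    funext p
    by_cases h : (p.1 : ℕ) = 0 <;> simp [h, mulVec_add, add_comm]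
  map_smul' c v := by
    funext p
    by_cases h : (p.1 : ℕ) = 0 <;> simp [h, mulVec_smul]

lemma expandByPowers_block (A : Matrix (Fin d) (Fin d) K) (v : Fin d → K) (i : Fin s) :
    (fun b => expandByPowers s A v (i, b)) =
      if (i : ℕ) = 0 then A ^ (i : ℕ) *ᵥ v else -(A ^ (i : ℕ) *ᵥ v) := by
  funext b
  split_ifs with h <;> simp [expandByPowers, h]

lemma Lsub_one_mulVec_expandByPowers (hs : 2 ≤ s) (A : Matrix (Fin d) (Fin d) K)
    (v : Fin d → K) :
    Lsub s d 1 A *ᵥ expandByPowers s A v =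
      fun p => if (p.1 : ℕ) = s - 1 then ((A ^ s - A) *ᵥ v) p.2 else 0 := by
  funext ⟨i, a⟩
  rw [Lsub_one_mulVec_apply, expandByPowers_block, expandByPowers_block]
  have hlt := i.isLt
  by_cases hi0 : (i : ℕ) = 0
  · simp [hi0, show 0 + 1 < s by omega, show 0 ≠ s - 1 by omega, expandByPowers]
  · by_cases hlast : (i : ℕ) + 1 < s
    · simp [hi0, hlast, show (i : ℕ) ≠ s - 1 by omega, expandByPowers, mulVec_neg, mulVec_mulVec,
        ← pow_succ']
    · have hpow : A ^ s = A * A ^ (i : ℕ) := by rw [← pow_succ']; congr; omega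
      have hi : (i : ℕ) = s - 1 := by omega
      rw [if_neg hi0, dif_neg hlast, if_pos (And.intro hi hi0), if_pos hi]
      simp [hi0, mulVec_neg, mulVec_mulVec, hpow, sub_eq_add_neg, add_mulVec, neg_mulVec]

lemma eq_expandByPowers_of_Lsub_one_mulVec_eq_zero (hs : 0 < s)
    {A : Matrix (Fin d) (Fin d) K} {x : Fin s × Fin d → K} (hx : Lsub s d 1 A *ᵥ x = 0) :
    x = expandByPowers s A (fun b => x (⟨0, hs⟩, b)) := by
  have hblock : ∀ (k : ℕ) (hk : k < s), (fun b => x (⟨k, hk⟩, b)) =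
      fun b => expandByPowers s A (fun b => x (⟨0, hs⟩, b)) (⟨k, hk⟩, b) := by
    intro k
    induction k with
    | zero => intro hk; simp [expandByPowers]
    | succ k ih =>
      intro hk
      funext a
      have hrow := congrFun hx (⟨k, by omega⟩, a)
      rw [Lsub_one_mulVec_apply, dif_pos hk, if_neg (show ¬(k = s - 1 ∧ k ≠ 0) by omega),
        add_zero, ih, expandByPowers_block, Pi.zero_apply] at hrow
      rw [eq_neg_of_add_eq_zero_right hrow]
      by_cases hk0 : k = 0 <;> simp [hk0, expandByPowers, mulVec_neg, mulVec_mulVec, pow_succ']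
  funext ⟨i, a⟩
  exact congrFun (hblock i i.isLt) a

lemma ker_mulVecLin_Lsub_one (hs : 2 ≤ s) (A : Matrix (Fin d) (Fin d) K) :
    LinearMap.ker (Lsub s d 1 A).mulVecLin =
      (LinearMap.ker (A ^ s - A).mulVecLin).map (expandByPowers s A) := by
  ext x
  simp only [LinearMap.mem_ker, mulVecLin_apply, Submodule.mem_map]
  constructor
  · intro hx
    have hx_eq := eq_expandByPowers_of_Lsub_one_mulVec_eq_zero (by omega) hx
    refine ⟨_, ?_, hx_eq.symm⟩
    rw [hx_eq, Lsub_one_mulVec_expandByPowers hs] at hx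
    funext a
    simpa using congrFun hx (⟨s - 1, by omega⟩, a)
  · rintro ⟨v, hv, rfl⟩
    funext p
    simp [Lsub_one_mulVec_expandByPowers hs, hv]

lemma expandByPowers_injective (hs : 0 < s) (A : Matrix (Fin d) (Fin d) K) :
    Function.Injective (expandByPowers s A) := fun v w h =>
  funext fun a => by simpa [expandByPowers] using congrFun h (⟨0, hs⟩, a)

lemma finrank_ker_mulVecLin_Lsub_one (hs : 2 ≤ s) (A : Matrix (Fin d) (Fin d) K) :
    Module.finrank K (LinearMap.ker (Lsub s d 1 A).mulVecLin) =
      Module.finrank K (LinearMap.ker (A ^ s - A).mulVecLin) := by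
  rw [ker_mulVecLin_Lsub_one hs]
  exact (Submodule.equivMapOfInjective _ (expandByPowers_injective (by omega) A) _).finrank_eq.symm

lemma Matrix.rank_add_finrank_ker {m n : Type*} [Fintype m] [Fintype n] (B : Matrix m n K) :
    B.rank + Module.finrank K (LinearMap.ker B.mulVecLin) = Fintype.card n := by
  rw [Matrix.rank, LinearMap.finrank_range_add_finrank_ker, Module.finrank_fintype_fun_eq_card]

end

theorem stmt_6_general (K : Type*) [Field K] (s : ℕ) (hs : 2 ≤ s) (d : ℕ)
    (A : Matrix (Fin d) (Fin d) K) :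
    (Lsub s d (1 : Matrix (Fin d) (Fin d) K) A).rank = (s - 1) * d + (A ^ s - A).rank := by
  have hL := (Lsub s d 1 A).rank_add_finrank_ker
  have hB := (A ^ s - A).rank_add_finrank_ker
  rw [finrank_ker_mulVecLin_Lsub_one hs, Fintype.card_prod, Fintype.card_fin, Fintype.card_fin]
    at hL
  rw [Fintype.card_fin] at hB
  have hsd : d ≤ s * d := Nat.le_mul_of_pos_left d (by omega)
  rw [Nat.sub_one_mul]
  omega

theorem stmt_6 (K : Type*) [Field K] (s : ℕ) (hs : 2 ≤ s) (d : ℕ) (hd : 1 ≤ d)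
    (A : Matrix (Fin d) (Fin d) K) :
    (Lsub s d (1 : Matrix (Fin d) (Fin d) K) A).rank = (s - 1) * d + (A ^ s - A).rank :=
  stmt_6_general K s hs d A
end

section
/- Let K = F_q be a finite field, d ≥ 2, s = q^d, and n ≥ s + 1; set r = n − s. With D(t_0, t_1) the n × n linear matrix of the previous context, there exist d × d matrices A_0, A_1 over K such that rank(D(A_0, A_1)) > (n−1)d. -/
/-!
Take `A₀ = 1` and `A₁ = N` with `N ≠ 0` and `N * N = 0`, e.g. `N = E_{1,d}`. If `x = (x_j)` is
in the kernel of `D(1, N)`, the rows `j ≥ s` give `x_j = 0`, and the rows of the Higman cycle give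
`x_{j+1} = ±N x_j`, so `N x_j = 0` for `0 < j < s` because `N² = 0`. The wrap-around row then
forces `N x_0 = 0`, and hence `x_j = 0` for every `j ≠ 0`. So `x ↦ x_0` embeds the kernel into
the proper subspace `ker N` of `K^d`, and rank–nullity gives `rank D(1, N) > (n - 1) d`.
-/

/-- The `nd × nd` matrix `D(t₀, t₁)` (with `d × d` blocks) obtained from the `n × n` linear
matrix `D = diag(L, t₀ I_{n-s})` — where `L` is the `s × s` Higman linearization of `T^s - T`
(diagonal `t₁, -t₁, …, -t₁`, superdiagonal `t₀`, entry `-t₁` in position `(s,1)`) — by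
substituting `t₀ := A₀` and `t₁ := A₁`. -/
def Dsub {K : Type*} [Field K] (s n d : ℕ) (A₀ A₁ : Matrix (Fin d) (Fin d) K) :
    Matrix (Fin n × Fin d) (Fin n × Fin d) K :=
  Matrix.of fun p q =>
    if (p.1 : ℕ) < s ∧ (q.1 : ℕ) < s then
      (if p.1 = q.1 then (if (p.1 : ℕ) = 0 then A₁ p.2 q.2 else -A₁ p.2 q.2) else 0)
      + (if (q.1 : ℕ) = (p.1 : ℕ) + 1 then A₀ p.2 q.2 else 0)
      + (if (p.1 : ℕ) = s - 1 ∧ (q.1 : ℕ) = 0 ∧ p.1 ≠ q.1 then -A₁ p.2 q.2 else 0)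
    else if p.1 = q.1 then A₀ p.2 q.2 else 0

open Matrix

section

variable {K : Type*} [Field K] {s n d : ℕ}

section

variable {A₀ A₁ : Matrix (Fin d) (Fin d) K} {x : Fin n × Fin d → K} {i j : Fin n} {p q : Fin d}

theorem Dsub_apply_self_of_lt (hi : (i : ℕ) < s) :
    Dsub s n d A₀ A₁ (i, p) (i, q) = (if (i : ℕ) = 0 then A₁ else -A₁) p q := by
  simp only [Dsub, of_apply]
  split_ifs <;> first | omega | simp_all

theorem Dsub_apply_self_of_le (hi : s ≤ (i : ℕ)) :
    Dsub s n d A₀ A₁ (i, p) (i, q) = A₀ p q := by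
  simp [Dsub, hi.not_gt]

theorem Dsub_apply_succ (hij : (j : ℕ) = i + 1) (hj : (j : ℕ) < s) :
    Dsub s n d A₀ A₁ (i, p) (j, q) = A₀ p q := by
  simp only [Dsub, of_apply, Fin.ext_iff]
  split_ifs <;> first | omega | simp_all

theorem Dsub_apply_wrap (hi : (i : ℕ) + 1 = s) (hj : (j : ℕ) = 0) (hij : i ≠ j) :
    Dsub s n d A₀ A₁ (i, p) (j, q) = -A₁ p q := by
  simp only [Dsub, of_apply, Fin.ext_iff] at hij ⊢
  split_ifs <;> first | omega | simp_all

theorem Dsub_apply_eq_zero (hji : j ≠ i) (hj : (j : ℕ) = i + 1 → s ≤ (j : ℕ))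
    (hwrap : (i : ℕ) + 1 = s → (j : ℕ) ≠ 0) : Dsub s n d A₀ A₁ (i, p) (j, q) = 0 := by
  simp only [Dsub, of_apply, Fin.ext_iff] at hji ⊢
  split_ifs <;> first | omega | simp_all

theorem curry_Dsub_mulVec_apply :
    (Dsub s n d A₀ A₁ *ᵥ x).curry i p =
      ∑ j, ∑ q, Dsub s n d A₀ A₁ (i, p) (j, q) * x (j, q) := by
  simp only [Function.curry_apply, mulVec, dotProduct, Fintype.sum_prod_type]

theorem curry_Dsub_mulVec_of_le (hi : s ≤ (i : ℕ)) :
    (Dsub s n d A₀ A₁ *ᵥ x).curry i = A₀ *ᵥ x.curry i := by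
  ext p
  rw [curry_Dsub_mulVec_apply, Fintype.sum_eq_single i fun j hji => Finset.sum_eq_zero fun q _ => by
    rw [Dsub_apply_eq_zero hji (fun _ => by omega) (fun _ => by omega), zero_mul]]
  simp only [Dsub_apply_self_of_le hi]
  rfl

theorem curry_Dsub_mulVec_of_succ_lt (hij : (j : ℕ) = i + 1) (hj : (j : ℕ) < s) :
    (Dsub s n d A₀ A₁ *ᵥ x).curry i =
      (if (i : ℕ) = 0 then A₁ else -A₁) *ᵥ x.curry i + A₀ *ᵥ x.curry j := by
  have hij' : i ≠ j := by rintro rfl; omega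
  have hi : (i : ℕ) < s := by omega
  ext p
  rw [curry_Dsub_mulVec_apply, Fintype.sum_eq_add i j hij' fun k hk =>
    Finset.sum_eq_zero fun q _ => by
      rw [Dsub_apply_eq_zero hk.1 (fun h => absurd (Fin.ext (by omega)) hk.2) (by omega),
        zero_mul]]
  simp only [Dsub_apply_self_of_lt hi, Dsub_apply_succ hij hj]
  rfl

theorem curry_Dsub_mulVec_of_succ_eq {z : Fin n} (hi : (i : ℕ) + 1 = s) (hz : (z : ℕ) = 0) :
    (Dsub s n d A₀ A₁ *ᵥ x).curry i =
      if i = z then A₁ *ᵥ x.curry i else -(A₁ *ᵥ x.curry i) - A₁ *ᵥ x.curry z := by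
  have his : (i : ℕ) < s := by omega
  ext p
  split_ifs with hiz
  · subst hiz
    rw [curry_Dsub_mulVec_apply, Fintype.sum_eq_single i fun k hk =>
      Finset.sum_eq_zero fun q _ => by
        rw [Dsub_apply_eq_zero hk (fun _ => by omega) (fun _ => by omega), zero_mul]]
    simp only [Dsub_apply_self_of_lt his, hz, if_true]
    rfl
  · have hi0 : (i : ℕ) ≠ 0 := fun h => hiz (Fin.ext (by omega))
    rw [curry_Dsub_mulVec_apply, Fintype.sum_eq_add i z hiz fun k hk =>
      Finset.sum_eq_zero fun q _ => by
        rw [Dsub_apply_eq_zero hk.1 (fun _ => by omega)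
          (fun _ h => absurd (Fin.ext (by omega)) hk.2), zero_mul]]
    simp only [Dsub_apply_self_of_lt his, hi0, if_false, Dsub_apply_wrap hi hz hiz]
    simp [mulVec, dotProduct, sub_eq_add_neg]

end

variable {N : Matrix (Fin d) (Fin d) K} {x : Fin n × Fin d → K}

theorem curry_eq_zero_of_Dsub_one_mulVec_eq_zero_of_le (hx : Dsub s n d 1 N *ᵥ x = 0)
    {j : Fin n} (hj : s ≤ (j : ℕ)) : x.curry j = 0 := by
  have h := congrArg (Function.curry · j) hx
  rwa [curry_Dsub_mulVec_of_le hj, one_mulVec] at h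

theorem curry_eq_neg_of_Dsub_one_mulVec_eq_zero (hx : Dsub s n d 1 N *ᵥ x = 0) {i j : Fin n}
    (hij : (j : ℕ) = i + 1) (hj : (j : ℕ) < s) :
    x.curry j = -((if (i : ℕ) = 0 then N else -N) *ᵥ x.curry i) := by
  have h := congrArg (Function.curry · i) hx
  rw [curry_Dsub_mulVec_of_succ_lt hij hj, one_mulVec] at h
  exact eq_neg_of_add_eq_zero_right h

theorem mulVec_curry_eq_zero_of_Dsub_one_mulVec_eq_zero (hN : N * N = 0) (hsn : s ≤ n)
    (hx : Dsub s n d 1 N *ᵥ x = 0) (j : Fin n) : N *ᵥ x.curry j = 0 := by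
  have on_cycle (j : Fin n) (hj0 : (j : ℕ) ≠ 0) (hj : (j : ℕ) < s) : N *ᵥ x.curry j = 0 := by
    rw [curry_eq_neg_of_Dsub_one_mulVec_eq_zero hx (i := ⟨j - 1, by omega⟩)
      (show (j : ℕ) = j - 1 + 1 by omega) hj]
    split_ifs <;> simp [mulVec_neg, neg_mulVec, mulVec_mulVec, hN]
  rcases le_or_gt s j with hjs | hjs
  · rw [curry_eq_zero_of_Dsub_one_mulVec_eq_zero_of_le hx hjs, mulVec_zero]
  by_cases hj0 : (j : ℕ) = 0
  · have h := congrArg (Function.curry · ⟨s - 1, by omega⟩) hx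
    rw [curry_Dsub_mulVec_of_succ_eq (show s - 1 + 1 = s by omega) hj0] at h
    split_ifs at h with hlast
    · rwa [← hlast]
    · rw [on_cycle _ (fun h => hlast (Fin.ext (by omega))) (show s - 1 < s by omega), neg_zero,
        zero_sub] at h
      exact neg_eq_zero.mp h
  · exact on_cycle j hj0 hjs

theorem curry_eq_zero_of_Dsub_one_mulVec_eq_zero (hN : N * N = 0) (hsn : s ≤ n)
    (hx : Dsub s n d 1 N *ᵥ x = 0) {j : Fin n} (hj0 : (j : ℕ) ≠ 0) : x.curry j = 0 := by
  rcases le_or_gt s j with hjs | hjs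
  · exact curry_eq_zero_of_Dsub_one_mulVec_eq_zero_of_le hx hjs
  rw [curry_eq_neg_of_Dsub_one_mulVec_eq_zero hx (i := ⟨j - 1, by omega⟩)
    (show (j : ℕ) = j - 1 + 1 by omega) hjs]
  split_ifs <;>
    simp [neg_mulVec, mulVec_curry_eq_zero_of_Dsub_one_mulVec_eq_zero hN hsn hx]

theorem finrank_ker_Dsub_one_lt (hN : N * N = 0) (hN0 : N ≠ 0) (hsn : s ≤ n) (hn : 0 < n) :
    Module.finrank K (LinearMap.ker (Dsub s n d 1 N).mulVecLin) < d := by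
  let z : Fin n := ⟨0, hn⟩
  let restrict : LinearMap.ker (Dsub s n d 1 N).mulVecLin →ₗ[K] LinearMap.ker N.mulVecLin :=
    ((LinearMap.funLeft K K fun q => (z, q)).comp (LinearMap.ker _).subtype).codRestrict _
      fun x => mulVec_curry_eq_zero_of_Dsub_one_mulVec_eq_zero hN hsn x.2 z
  have hinj : Function.Injective restrict := by
    rw [← LinearMap.ker_eq_bot, Submodule.eq_bot_iff]
    rintro ⟨x, hx⟩ hx0
    have hxz : x.curry z = 0 := congrArg Subtype.val (LinearMap.mem_ker.mp hx0)
    ext ⟨j, q⟩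
    by_cases hj : j = z
    · exact congrFun (hj ▸ hxz) q
    · exact congrFun (curry_eq_zero_of_Dsub_one_mulVec_eq_zero hN hsn hx
        fun h => hj (Fin.ext h)) q
  have hker : LinearMap.ker N.mulVecLin ≠ ⊤ := fun h =>
    hN0 <| ext_iff_mulVec.mpr fun v => by
      simpa using LinearMap.mem_ker.mp (h ▸ Submodule.mem_top : v ∈ LinearMap.ker N.mulVecLin)
  calc Module.finrank K (LinearMap.ker (Dsub s n d 1 N).mulVecLin)
      ≤ Module.finrank K (LinearMap.ker N.mulVecLin) :=
        LinearMap.finrank_le_finrank_of_injective hinj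
    _ < Module.finrank K (Fin d → K) := Submodule.finrank_lt hker
    _ = d := Module.finrank_fin_fun K

theorem sub_one_mul_lt_rank_Dsub_one (hN : N * N = 0) (hN0 : N ≠ 0) (hsn : s ≤ n) (hn : 0 < n) :
    (n - 1) * d < (Dsub s n d 1 N).rank := by
  have hsum := LinearMap.finrank_range_add_finrank_ker (Dsub s n d 1 N).mulVecLin
  rw [Module.finrank_fintype_fun_eq_card, Fintype.card_prod, Fintype.card_fin,
    Fintype.card_fin] at hsum
  have hker := finrank_ker_Dsub_one_lt hN hN0 hsn hn
  have hd : d ≤ n * d := Nat.le_mul_of_pos_left d hn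
  rw [Matrix.rank, Nat.sub_one_mul]
  omega

end

theorem stmt_8_general (K : Type*) [Field K] (d : ℕ)
    (hd : 2 ≤ d) (s : ℕ) (n : ℕ) (hn : s + 1 ≤ n) :
    ∃ A₀ A₁ : Matrix (Fin d) (Fin d) K, (n - 1) * d < (Dsub s n d A₀ A₁).rank := by
  let e₁ : Fin d := ⟨0, by omega⟩
  let e_d : Fin d := ⟨d - 1, by omega⟩
  have hne : e_d ≠ e₁ := fun h => by simp [Fin.ext_iff, e₁, e_d] at h; omega
  have hsq : single e₁ e_d (1 : K) * single e₁ e_d 1 = 0 :=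
    single_mul_single_of_ne 1 e₁ e_d e₁ hne 1
  have hne0 : single e₁ e_d (1 : K) ≠ 0 := fun h => by
    simpa using congrFun (congrFun h e₁) e_d
  exact ⟨1, single e₁ e_d 1, sub_one_mul_lt_rank_Dsub_one hsq hne0 (by omega) (by omega)⟩

theorem stmt_8 (K : Type*) [Field K] [Fintype K] (q d : ℕ) (hq : Fintype.card K = q)
    (hd : 2 ≤ d) (s : ℕ) (hs : s = q ^ d) (n : ℕ) (hn : s + 1 ≤ n) :
    ∃ A₀ A₁ : Matrix (Fin d) (Fin d) K, (n - 1) * d < (Dsub s n d A₀ A₁).rank :=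
  stmt_8_general K d hd s n hn
end

section
/- Let d ≥ 2 and let f be a polynomial with coefficients in a field K (or more generally a noncommutative polynomial in m variables). Suppose L_f is an m' × m' linear matrix satisfying the Higman property: for all d × d matrices A_1, ..., A_m, rank(L_f(I_d, A_1, ..., A_m)) = (m'−1)d + rank(f(A_1,...,A_m)). Suppose f(A_1,...,A_m) is singular for all tuples of d × d matrices over K, but f(B_1,...,B_m) ≠ 0 for some tuple. Then for any r ≥ 1, the blow-up rank rk(D_{f,r}^{{d,d}}) of the linear matrix D_{f,r} = diag(L_f, t_0 I_r) satisfies (m'+r−1)d < rk(D_{f,r}^{{d,d}}) < (m'+r)d; in particular it is not divisible by d. -/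
/-!
Substitute `(B₀, …, B_m)` into `D_{f,r} = diag(L_f, t₀ I_r)`: the rank is
`rk L_f(B) + r · rk B₀`. If `B₀` is invertible, left multiplication by `I ⊗ B₀⁻¹` normalises
`B₀` to `I_d`, and the Higman property gives `rk L_f(B) = (m'-1)d + rk f(A) < m'd` because `f` is
singular everywhere; if `B₀` is singular, the `t₀ I_r` block loses rank instead. Either way the
rank stays below `(m'+r)d`. Conversely, `B = (I_d, A)` with `f(A) ≠ 0` gives rank
`(m'-1)d + rk f(A) + rd > (m'+r-1)d`. The blow-up rank therefore lies strictly between two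
consecutive multiples of `d`.
-/

open Kronecker

/-- The `(d,d)`-blow-up rank of the linear matrix `Σᵢ tᵢ Yᵢ` (coefficient matrices
`Y 0, …, Y m`): the maximal rank of `Σᵢ Yᵢ ⊗ Bᵢ` over all `d × d` matrices `B 0, …, B m`. -/
noncomputable def linBlowupRank {K ι : Type*} [Field K] [Fintype ι] [DecidableEq ι] (m d : ℕ)
    (Y : Fin (m + 1) → Matrix ι ι K) : ℕ :=
  sSup {t | ∃ B : Fin (m + 1) → Matrix (Fin d) (Fin d) K, t = (∑ i, (Y i) ⊗ₖ (B i)).rank}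

open Matrix Module

theorem LinearMap.finrank_range_prodMap {K V W V' W' : Type*} [Field K] [AddCommGroup V]
    [Module K V] [AddCommGroup W] [Module K W] [AddCommGroup V'] [Module K V'] [AddCommGroup W']
    [Module K W'] [FiniteDimensional K V'] [FiniteDimensional K W']
    (f : V →ₗ[K] V') (g : W →ₗ[K] W') :
    finrank K (range (f.prodMap g)) = finrank K (range f) + finrank K (range g) := by
  have hrange : range (f.prodMap g) = range ((range f).subtype.prodMap (range g).subtype) := by
    rw [range_prodMap, range_prodMap, Submodule.range_subtype, Submodule.range_subtype]
  rw [hrange, finrank_range_of_inj (Prod.map_injective.mpr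
    ⟨Subtype.val_injective, Subtype.val_injective⟩), finrank_prod]

namespace Matrix

variable {K : Type*} [Field K]

theorem rank_fromBlocks_zero_zero {n o : Type*} [Fintype n] [Fintype o] [DecidableEq n]
    [DecidableEq o] (A : Matrix n n K) (D : Matrix o o K) :
    (fromBlocks A 0 0 D).rank = A.rank + D.rank := by
  let e := LinearEquiv.sumArrowLequivProdArrow n o K K
  have h : (fromBlocks A 0 0 D).mulVecLin
      = e.symm.toLinearMap ∘ₗ (A.mulVecLin.prodMap D.mulVecLin) ∘ₗ e.toLinearMap := by
    refine LinearMap.ext fun x => funext fun i => ?_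
    cases i <;> simp [e, fromBlocks_mulVec, Equiv.sumArrowEquivProdArrow,
      LinearEquiv.sumArrowLequivProdArrow]
  rw [rank, rank, rank, h, LinearMap.range_comp, LinearMap.range_comp, LinearEquiv.range,
    Submodule.map_top, LinearEquiv.finrank_map_eq, LinearMap.finrank_range_prodMap]

theorem rank_eq_zero_iff {m n : Type*} [Fintype n] {A : Matrix m n K} : A.rank = 0 ↔ A = 0 := by
  have := FiniteDimensional.span_of_finite K (Set.finite_range A.col)
  rw [rank_eq_finrank_span_cols, Submodule.finrank_eq_zero, Submodule.span_eq_bot,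
    Set.forall_mem_range, ← transpose_eq_zero]
  exact ⟨funext, congrFun⟩

theorem rank_lt_card_of_not_isUnit {n : Type*} [Fintype n] [DecidableEq n] {A : Matrix n n K}
    (hA : ¬ IsUnit A) : A.rank < Fintype.card n := by
  refine A.rank_le_card_width.lt_of_ne fun h => hA ?_
  rw [← mulVec_surjective_iff_isUnit, ← coe_mulVecLin, ← LinearMap.range_eq_top]
  exact Submodule.eq_top_of_finrank_eq (by rw [← rank, h, finrank_fintype_fun_eq_card])

theorem isUnit_one_kronecker_iff {n p : Type*} [Fintype n] [DecidableEq n] [Nonempty n]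
    [Fintype p] [DecidableEq p] {B : Matrix p p K} :
    IsUnit ((1 : Matrix n n K) ⊗ₖ B) ↔ IsUnit B := by
  rw [isUnit_iff_isUnit_det, isUnit_iff_isUnit_det, det_kronecker, det_one, one_pow, one_mul,
    isUnit_pow_iff Fintype.card_ne_zero]

end Matrix

def linSubst {R ι n n' p p' : Type*} [Semiring R] [Fintype ι] (Y : ι → Matrix n n' R)
    (B : ι → Matrix p p' R) : Matrix (n × p) (n' × p') R :=
  ∑ i, Y i ⊗ₖ B i

section linSubst

variable {K ι n o p : Type*} [Field K] [Fintype ι]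

theorem linSubst_fromBlocks_zero_zero (X : ι → Matrix n n K) (Z : ι → Matrix o o K)
    (B : ι → Matrix p p K) :
    linSubst (fun i => fromBlocks (X i) 0 0 (Z i)) B
      = (fromBlocks (linSubst X B) 0 0 (linSubst Z B)).submatrix
          (Equiv.sumProdDistrib n o p) (Equiv.sumProdDistrib n o p) := by
  ext ⟨i | i, a⟩ ⟨j | j, b⟩ <;> simp [linSubst, Matrix.sum_apply]

theorem linSubst_ite_one_zero [DecidableEq o] [DecidableEq ι] (i₀ : ι) (B : ι → Matrix p p K) :
    linSubst (fun i => if i = i₀ then (1 : Matrix o o K) else 0) B = 1 ⊗ₖ B i₀ := by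
  rw [linSubst, Finset.sum_eq_single i₀ (fun i _ hi => by rw [if_neg hi, zero_kronecker])
    (by simp), if_pos rfl]

theorem rank_linSubst_eq_of_isUnit [Fintype n] [DecidableEq n] [Fintype p] [DecidableEq p]
    {m : ℕ} (X : Fin (m + 1) → Matrix n n K) (B : Fin (m + 1) → Matrix p p K)
    (hB : IsUnit (B 0)) :
    (linSubst X B).rank = (linSubst X (Fin.cons 1 fun j => (B 0)⁻¹ * B j.succ)).rank := by
  have hdet : IsUnit (B 0).det := (isUnit_iff_isUnit_det _).mp hB
  have hfactor : linSubst X B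
      = (1 ⊗ₖ B 0) * linSubst X (Fin.cons 1 fun j => (B 0)⁻¹ * B j.succ) := by
    rw [linSubst, linSubst, Finset.mul_sum]
    refine Finset.sum_congr rfl fun i _ => ?_
    rw [← mul_kronecker_mul, Matrix.one_mul]
    congr 1
    refine Fin.cases ?_ (fun j => ?_) i
    · simp
    · simp [← Matrix.mul_assoc, mul_nonsing_inv _ hdet]
  rw [hfactor, rank_mul_eq_right_of_isUnit_det]
  rw [det_kronecker, det_one, one_pow, one_mul]
  exact hdet.pow _

end linSubst

section blowupRank

variable {K ι : Type*} [Field K] [Fintype ι] {m d : ℕ}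

theorem bddAbove_rank_linSubst (Y : Fin (m + 1) → Matrix ι ι K) :
    BddAbove {t | ∃ B : Fin (m + 1) → Matrix (Fin d) (Fin d) K, t = (linSubst Y B).rank} :=
  ⟨Fintype.card ι * d, by rintro _ ⟨B, rfl⟩; simpa using (linSubst Y B).rank_le_card_width⟩

variable [DecidableEq ι]

theorem rank_linSubst_le_linBlowupRank (Y : Fin (m + 1) → Matrix ι ι K)
    (B : Fin (m + 1) → Matrix (Fin d) (Fin d) K) :
    (linSubst Y B).rank ≤ linBlowupRank m d Y :=
  le_csSup (bddAbove_rank_linSubst Y) ⟨B, rfl⟩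

theorem exists_rank_linSubst_eq_linBlowupRank (Y : Fin (m + 1) → Matrix ι ι K) :
    ∃ B : Fin (m + 1) → Matrix (Fin d) (Fin d) K, (linSubst Y B).rank = linBlowupRank m d Y :=
  let ⟨B, hB⟩ := Nat.sSup_mem (by exact ⟨_, 0, rfl⟩) (bddAbove_rank_linSubst Y)
  ⟨B, hB.symm⟩

end blowupRank

def HasHigmanProperty {K : Type*} [Field K] {m m' : ℕ} (d : ℕ) (f : FreeAlgebra K (Fin m))
    (X : Fin (m + 1) → Matrix (Fin m') (Fin m') K) : Prop :=
  ∀ A : Fin m → Matrix (Fin d) (Fin d) K,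
    (linSubst X (Fin.cons 1 A)).rank = (m' - 1) * d + (FreeAlgebra.lift K A f).rank

/-- The coefficients of `diag(L, t₀ I)` for the linear matrix `L = Σᵢ tᵢ Xᵢ`. -/
def diagT0 {K n : Type*} [Field K] {m : ℕ} (X : Fin (m + 1) → Matrix n n K) (o : Type*)
    [DecidableEq o] : Fin (m + 1) → Matrix (n ⊕ o) (n ⊕ o) K :=
  fun i => fromBlocks (X i) 0 0 (if i = 0 then 1 else 0)

section Higman

variable {K o : Type*} [Field K] [Fintype o] [DecidableEq o] {d m m' : ℕ}
  {f : FreeAlgebra K (Fin m)} {X : Fin (m + 1) → Matrix (Fin m') (Fin m') K}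

theorem rank_linSubst_diagT0 (B : Fin (m + 1) → Matrix (Fin d) (Fin d) K) :
    (linSubst (diagT0 X o) B).rank = (linSubst X B).rank + ((1 : Matrix o o K) ⊗ₖ B 0).rank := by
  unfold diagT0
  rw [linSubst_fromBlocks_zero_zero, rank_submatrix, rank_fromBlocks_zero_zero,
    linSubst_ite_one_zero]

namespace HasHigmanProperty

theorem one_le (h : HasHigmanProperty d f X)
    (hnz : ∃ B : Fin m → Matrix (Fin d) (Fin d) K, FreeAlgebra.lift K B f ≠ 0) : 1 ≤ m' := by
  obtain ⟨B, hB⟩ := hnz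
  refine Nat.one_le_iff_ne_zero.mpr fun hm' => hB (rank_eq_zero_iff.mp ?_)
  subst hm'
  simpa using (h B).symm.trans_le (linSubst X (Fin.cons 1 B)).rank_le_card_width

theorem rank_linSubst_lt_of_isUnit (h : HasHigmanProperty d f X)
    (hsing : ∀ A : Fin m → Matrix (Fin d) (Fin d) K, ¬ IsUnit (FreeAlgebra.lift K A f))
    {B : Fin (m + 1) → Matrix (Fin d) (Fin d) K} (hB : IsUnit (B 0)) :
    (linSubst X B).rank < (m' - 1) * d + d := by
  rw [rank_linSubst_eq_of_isUnit X B hB, h]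
  simpa using rank_lt_card_of_not_isUnit (hsing _)

theorem rank_linSubst_diagT0_lt [Nonempty o] (h : HasHigmanProperty d f X)
    (hsing : ∀ A : Fin m → Matrix (Fin d) (Fin d) K, ¬ IsUnit (FreeAlgebra.lift K A f))
    (hm' : 1 ≤ m') (B : Fin (m + 1) → Matrix (Fin d) (Fin d) K) :
    (linSubst (diagT0 X o) B).rank < (m' + Fintype.card o) * d := by
  rw [rank_linSubst_diagT0]
  by_cases hB : IsUnit (B 0)
  · have hX := h.rank_linSubst_lt_of_isUnit hsing hB
    have hT0 : ((1 : Matrix o o K) ⊗ₖ B 0).rank ≤ Fintype.card o * d := by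
      simpa using rank_le_card_width ((1 : Matrix o o K) ⊗ₖ B 0)
    obtain ⟨k, rfl⟩ := Nat.exists_eq_add_of_le' hm'
    simp only [Nat.add_sub_cancel] at hX
    nlinarith
  · have hX : (linSubst X B).rank ≤ m' * d := by simpa using (linSubst X B).rank_le_card_width
    have hT0 : ((1 : Matrix o o K) ⊗ₖ B 0).rank < Fintype.card o * d := by
      simpa using rank_lt_card_of_not_isUnit (isUnit_one_kronecker_iff.not.mpr hB)
    nlinarith

theorem lt_rank_linSubst_diagT0_cons (h : HasHigmanProperty d f X)
    {A : Fin m → Matrix (Fin d) (Fin d) K} (hA : FreeAlgebra.lift K A f ≠ 0) :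
    (m' - 1 + Fintype.card o) * d < (linSubst (diagT0 X o) (Fin.cons 1 A)).rank := by
  rw [rank_linSubst_diagT0, h, Fin.cons_zero, one_kronecker_one, rank_one, Fintype.card_prod,
    Fintype.card_fin, add_mul]
  have := Nat.pos_of_ne_zero (rank_eq_zero_iff.not.mpr hA)
  omega

end HasHigmanProperty

end Higman

theorem stmt_10_general (K : Type*) [Field K] (d : ℕ) (m m' r : ℕ) (hr : 1 ≤ r)
    (f : FreeAlgebra K (Fin m))
    -- `X 0, …, X m` are the coefficient matrices of the `m' × m'` linear matrix
    -- `L_f(t₀, …, t_m) = Σᵢ tᵢ Xᵢ`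
    (X : Fin (m + 1) → Matrix (Fin m') (Fin m') K)
    -- the Higman property of `L_f`:
    (hHigman : ∀ A : Fin m → Matrix (Fin d) (Fin d) K,
      (∑ i, (X i) ⊗ₖ ((Fin.cons 1 A : Fin (m + 1) → Matrix (Fin d) (Fin d) K) i)).rank
        = (m' - 1) * d + ((FreeAlgebra.lift K A) f).rank)
    (hsing : ∀ A : Fin m → Matrix (Fin d) (Fin d) K, ¬ IsUnit ((FreeAlgebra.lift K A) f))
    (hnz : ∃ B : Fin m → Matrix (Fin d) (Fin d) K, (FreeAlgebra.lift K B) f ≠ 0)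
    -- `Y` is the coefficient-matrix family of `D_{f,r} = diag(L_f, t₀ I_r)`
    (Y : Fin (m + 1) → Matrix (Fin m' ⊕ Fin r) (Fin m' ⊕ Fin r) K)
    (hY : ∀ i, Y i = Matrix.fromBlocks (X i) 0 0 (if i = 0 then 1 else 0)) :
    (m' + r - 1) * d < linBlowupRank m d Y ∧ linBlowupRank m d Y < (m' + r) * d ∧
      ¬ (d ∣ linBlowupRank m d Y) := by
  have h : HasHigmanProperty d f X := hHigman
  have hm' := h.one_le hnz
  obtain rfl : Y = diagT0 X (Fin r) := funext hY
  obtain ⟨A, hA⟩ := hnz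
  obtain ⟨B, hB⟩ := exists_rank_linSubst_eq_linBlowupRank (d := d) (diagT0 X (Fin r))
  have : Nonempty (Fin r) := ⟨⟨0, hr⟩⟩
  have hlt : linBlowupRank m d (diagT0 X (Fin r)) < (m' + r) * d := by
    simpa [hB] using h.rank_linSubst_diagT0_lt (o := Fin r) hsing hm' B
  have hgt : (m' + r - 1) * d < linBlowupRank m d (diagT0 X (Fin r)) := calc
    (m' + r - 1) * d = (m' - 1 + Fintype.card (Fin r)) * d := by
      rw [Fintype.card_fin, Nat.sub_add_comm hm']
    _ < (linSubst (diagT0 X (Fin r)) (Fin.cons 1 A)).rank := h.lt_rank_linSubst_diagT0_cons hA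
    _ ≤ _ := rank_linSubst_le_linBlowupRank _ _
  refine ⟨hgt, hlt, Nat.not_dvd_of_lt_of_lt_mul_succ (k := m' + r - 1) (by rwa [mul_comm]) ?_⟩
  rwa [Nat.sub_add_cancel (by omega), mul_comm]

theorem stmt_10 (K : Type*) [Field K] (d : ℕ) (hd : 2 ≤ d) (m m' r : ℕ) (hr : 1 ≤ r)
    (f : FreeAlgebra K (Fin m))
    -- `X 0, …, X m` are the coefficient matrices of the `m' × m'` linear matrix
    -- `L_f(t₀, …, t_m) = Σᵢ tᵢ Xᵢ`
    (X : Fin (m + 1) → Matrix (Fin m') (Fin m') K)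
    -- the Higman property of `L_f`:
    (hHigman : ∀ A : Fin m → Matrix (Fin d) (Fin d) K,
      (∑ i, (X i) ⊗ₖ ((Fin.cons 1 A : Fin (m + 1) → Matrix (Fin d) (Fin d) K) i)).rank
        = (m' - 1) * d + ((FreeAlgebra.lift K A) f).rank)
    (hsing : ∀ A : Fin m → Matrix (Fin d) (Fin d) K, ¬ IsUnit ((FreeAlgebra.lift K A) f))
    (hnz : ∃ B : Fin m → Matrix (Fin d) (Fin d) K, (FreeAlgebra.lift K B) f ≠ 0)
    -- `Y` is the coefficient-matrix family of `D_{f,r} = diag(L_f, t₀ I_r)`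
    (Y : Fin (m + 1) → Matrix (Fin m' ⊕ Fin r) (Fin m' ⊕ Fin r) K)
    (hY : ∀ i, Y i = Matrix.fromBlocks (X i) 0 0 (if i = 0 then 1 else 0)) :
    (m' + r - 1) * d < linBlowupRank m d Y ∧ linBlowupRank m d Y < (m' + r) * d ∧
      ¬ (d ∣ linBlowupRank m d Y) :=
  stmt_10_general K d m m' r hr f X hHigman hsing hnz Y hY
end
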